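/- arXiv:2207.03280 — 5 statements merged into one kernel-verified Lean document; each statement's English description precedes it below -/
import Mathlib

section
/- If 0 < d < π/(2γ) and (b, ω) with ω ∈ (0, π/d) satisfies b = −γe^{−bd}cos(ωd) and ω = γe^{−bd}sin(ωd), then b < 0. -/
open Real

/-- If `0 < d < π/(2γ)` and `(b, ω)` with `ω ∈ (0, π/d)` satisfies the root equations
of the delayed rate-control system, then `b < 0` (damped oscillations). -/
theorem delayed_control_stable_root
    (γ d b ω : ℝ) (hγ : 0 < γ) (hd : 0 < d) (hdcrit : d < Real.pi / (2 * γ))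
    (hω : ω ∈ Set.Ioo 0 (Real.pi / d))
    (hb : b = -γ * Real.exp (-b * d) * Real.cos (ω * d))
    (hωeq : ω = γ * Real.exp (-b * d) * Real.sin (ω * d)) :
    b < 0 := by
  by_contra h
  push_neg at h
  obtain ⟨hω0, hωpi⟩ := hω
  have hE : Real.exp (-b * d) ≤ 1 := by
    apply Real.exp_le_one_iff.mpr
    nlinarith
  have hEpos : 0 < Real.exp (-b * d) := Real.exp_pos _
  -- cos (ω * d) ≤ 0
  have hcos : Real.cos (ω * d) ≤ 0 := by
    by_contra hc
    push_neg at hc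
    nlinarith [mul_pos (mul_pos hγ hEpos) hc]
  -- ω * d ≥ π / 2
  have hge : Real.pi / 2 ≤ ω * d := by
    by_contra hlt
    push_neg at hlt
    have : 0 < Real.cos (ω * d) :=
      Real.cos_pos_of_mem_Ioo ⟨by nlinarith [Real.pi_pos], hlt⟩
    linarith
  -- ω ≤ γ
  have hsin : Real.sin (ω * d) ≤ 1 := Real.sin_le_one _
  have hωle : ω ≤ γ := by
    have h1 : γ * Real.exp (-b * d) * Real.sin (ω * d) ≤ γ * Real.exp (-b * d) := by
      nlinarith [mul_pos hγ hEpos]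
    nlinarith
  -- γ < π / (2 * d)
  have hγlt : γ < Real.pi / (2 * d) := by
    rw [lt_div_iff₀ (by linarith)]
    rw [lt_div_iff₀ (by linarith)] at hdcrit
    nlinarith
  have : Real.pi / (2 * d) ≤ ω := by
    rw [div_le_iff₀ (by linarith)]
    linarith
  linarith
end

section
/- Let γ, δ > 0. The system ω² = γδ·cos(ωd), ω = γ·sin(ωd) in the unknowns ω > 0 and d > 0 is solved by ω* = sqrt((−δ² + sqrt(δ⁴ + 4γ²δ²))/2) and d* = arcsin(ω*/γ)/ω*. In particular 0 < ω* < γ, so d* is well-defined. -/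
open Real

/-! `ω*²` is the positive root of `x² + δ²x - γ²δ² = 0`, so `ω*⁴ = δ²(γ² - ω*²)`; this forces
`ω* < γ`, and it is exactly the identity `(ω*²/(γδ))² + (ω*/γ)² = 1` making `ω*d* = arcsin(ω*/γ)`
solve both equations at once. -/

lemma quadratic_pos_root_pos (b : ℝ) {c : ℝ} (hc : 0 < c) :
    0 < (-b + √(b ^ 2 + 4 * c)) / 2 := by
  have : |b| < √(b ^ 2 + 4 * c) := by
    rw [← sqrt_sq_eq_abs]
    exact sqrt_lt_sqrt (sq_nonneg b) (by linarith)
  linarith [le_abs_self b]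

lemma quadratic_pos_root_sq_add {b c : ℝ} (h : 0 ≤ b ^ 2 + 4 * c) :
    ((-b + √(b ^ 2 + 4 * c)) / 2) ^ 2 + b * ((-b + √(b ^ 2 + 4 * c)) / 2) = c := by
  linear_combination (sq_sqrt h) / 4

section CriticalPoint

variable {γ δ ω : ℝ}

lemma lt_of_sq_sq_add_eq (hγ : 0 < γ) (hω : 0 < ω)
    (h : (ω ^ 2) ^ 2 + δ ^ 2 * ω ^ 2 = γ ^ 2 * δ ^ 2) : ω < γ := by
  have : δ ^ 2 * (γ ^ 2 - ω ^ 2) = (ω ^ 2) ^ 2 := by linear_combination -h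
  by_contra! hle
  have hsq : γ ^ 2 ≤ ω ^ 2 := pow_le_pow_left₀ hγ.le hle 2
  nlinarith [mul_nonneg (sq_nonneg δ) (sub_nonneg.2 hsq), pow_pos hω 4]

lemma mul_sin_arcsin_div (hγ : 0 < γ) (hω : |ω| ≤ γ) : γ * sin (arcsin (ω / γ)) = ω := by
  obtain ⟨hlo, hhi⟩ := abs_le.mp hω
  rw [sin_arcsin (by rwa [le_div_iff₀ hγ, neg_one_mul]) (by rwa [div_le_one hγ])]
  field_simp

lemma mul_cos_arcsin_div (hγ : 0 < γ) (hδ : 0 < δ)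
    (h : (ω ^ 2) ^ 2 + δ ^ 2 * ω ^ 2 = γ ^ 2 * δ ^ 2) :
    γ * δ * cos (arcsin (ω / γ)) = ω ^ 2 := by
  have hcos : 1 - (ω / γ) ^ 2 = (ω ^ 2 / (γ * δ)) ^ 2 := by
    field_simp
    linear_combination -h
  rw [cos_arcsin, hcos, sqrt_sq (by positivity)]
  field_simp

end CriticalPoint

/-- The critical point equations `ω² = γδ cos(ωd)`, `ω = γ sin(ωd)` for the shifted
exponential delay distribution are solved by the indicated `ω*` and `d*`, and `0 < ω* < γ`
so that `d*` is well-defined. -/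
theorem shifted_exponential_critical_point
    (γ δ : ℝ) (hγ : 0 < γ) (hδ : 0 < δ) :
    let ωs := Real.sqrt ((-δ ^ 2 + Real.sqrt (δ ^ 4 + 4 * γ ^ 2 * δ ^ 2)) / 2)
    let ds := Real.arcsin (ωs / γ) / ωs
    0 < ωs ∧ ωs < γ ∧
      ωs ^ 2 = γ * δ * Real.cos (ωs * ds) ∧
      ωs = γ * Real.sin (ωs * ds) := by
  intro ωs ds
  have hdisc : δ ^ 4 + 4 * γ ^ 2 * δ ^ 2 = (δ ^ 2) ^ 2 + 4 * (γ ^ 2 * δ ^ 2) := by ring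
  have hroot_pos := quadratic_pos_root_pos (δ ^ 2) (by positivity : 0 < γ ^ 2 * δ ^ 2)
  have hroot := quadratic_pos_root_sq_add (b := δ ^ 2) (c := γ ^ 2 * δ ^ 2) (by positivity)
  rw [← hdisc] at hroot_pos hroot
  have hωs_sq : ωs ^ 2 = (-δ ^ 2 + √(δ ^ 4 + 4 * γ ^ 2 * δ ^ 2)) / 2 := sq_sqrt hroot_pos.le
  rw [← hωs_sq] at hroot
  have hωs_pos : 0 < ωs := sqrt_pos.mpr hroot_pos
  have hωs_lt : ωs < γ := lt_of_sq_sq_add_eq hγ hωs_pos hroot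
  have hphase : ωs * ds = arcsin (ωs / γ) := mul_div_cancel₀ _ hωs_pos.ne'
  refine ⟨hωs_pos, hωs_lt, ?_, ?_⟩
  · rw [hphase, mul_cos_arcsin_div hγ hδ hroot]
  · rw [hphase, mul_sin_arcsin_div hγ ((abs_of_pos hωs_pos).trans_le hωs_lt.le)]
end

section
/- With ω*(δ) = sqrt((−δ² + sqrt(δ⁴ + 4γ²δ²))/2) and d*(δ) = arcsin(ω*(δ)/γ)/ω*(δ) for fixed γ > 0: as δ → ∞, d*(δ) → π/(2γ), and as δ → 0⁺, d*(δ) → 1/γ. -/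
/-!
Write `d*(δ) = f(ω*(δ))` with `f ω = arcsin (ω / γ) / ω`. Rationalising,
`ω*(δ)² = (√(x² + 4γ²x) - x) / 2` with `x = δ²`, and `√(x² + c x) - x = c / (√(1 + c/x) + 1) → c/2`,
so `ω* → γ` as `δ → ∞` and `d* → arcsin 1 / γ = π / (2γ)` by continuity of `f` at `γ`.
As `δ → 0⁺`, `ω*` is continuous with `ω*(0) = 0` and positive elsewhere, so `ω* → 0` through
nonzero values, where `f ω` is a difference quotient of `ω ↦ arcsin (ω / γ)` at `0`, tending to
its derivative `1 / γ`.
-/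

open Real Filter Topology

theorem tendsto_arcsin_div_const_div_self (γ : ℝ) :
    Tendsto (fun x => arcsin (x / γ) / x) (𝓝[≠] 0) (𝓝 γ⁻¹) := by
  have hderiv : HasDerivAt (fun x => arcsin (x / γ)) γ⁻¹ 0 := by
    simpa [Function.comp_def] using (hasDerivAt_arcsin (x := 0 / γ) (by simp) (by simp)).comp 0
      ((hasDerivAt_id' 0).div_const γ)
  simpa [slope_fun_def_field] using hasDerivAt_iff_tendsto_slope.mp hderiv

theorem sqrt_sq_add_mul_sub_self {x : ℝ} (c : ℝ) (hx : 0 < x) (hc : 0 ≤ 1 + c / x) :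
    √(x ^ 2 + c * x) - x = c / (√(1 + c / x) + 1) := by
  have hs : √(1 + c / x) ^ 2 = 1 + c / x := sq_sqrt hc
  rw [show x ^ 2 + c * x = x ^ 2 * (1 + c / x) by field_simp, sqrt_mul (sq_nonneg x),
    sqrt_sq hx.le, eq_div_iff (by positivity)]
  calc (x * √(1 + c / x) - x) * (√(1 + c / x) + 1) = x * (√(1 + c / x) ^ 2 - 1) := by ring
    _ = c := by rw [hs]; field_simp; ring

theorem tendsto_sqrt_sq_add_mul_sub_self_atTop (c : ℝ) :
    Tendsto (fun x => √(x ^ 2 + c * x) - x) atTop (𝓝 (c / 2)) := by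
  have hcx : Tendsto (fun x => c / x) atTop (𝓝 0) := tendsto_const_nhds.div_atTop tendsto_id
  have hcont : ContinuousAt (fun y => c / (√(1 + y) + 1)) 0 :=
    continuousAt_const.div (by fun_prop) (by positivity)
  have hlim := hcont.tendsto.comp hcx
  rw [add_zero, sqrt_one, one_add_one_eq_two] at hlim
  refine hlim.congr' ?_
  filter_upwards [eventually_gt_atTop 0, hcx.eventually (lt_mem_nhds neg_one_lt_zero)]
    with x hx hgt
  exact (sqrt_sq_add_mul_sub_self c hx (by linarith)).symm

noncomputable def criticalFrequency (γ δ : ℝ) : ℝ :=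
  √((-δ ^ 2 + √(δ ^ 4 + 4 * γ ^ 2 * δ ^ 2)) / 2)

theorem criticalFrequency_eq (γ δ : ℝ) :
    criticalFrequency γ δ = √((√((δ ^ 2) ^ 2 + 4 * γ ^ 2 * δ ^ 2) - δ ^ 2) / 2) := by
  rw [criticalFrequency, ← pow_mul, neg_add_eq_sub]

theorem tendsto_criticalFrequency_atTop (γ : ℝ) :
    Tendsto (criticalFrequency γ) atTop (𝓝 |γ|) := by
  have hinner := ((tendsto_sqrt_sq_add_mul_sub_self_atTop (4 * γ ^ 2)).comp
    (tendsto_pow_atTop two_ne_zero)).div_const 2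
  have hlim := (continuous_sqrt.tendsto _).comp hinner
  rw [show 4 * γ ^ 2 / 2 / 2 = γ ^ 2 by ring, sqrt_sq_eq_abs] at hlim
  exact hlim.congr fun δ => (criticalFrequency_eq γ δ).symm

theorem continuous_criticalFrequency (γ : ℝ) : Continuous (criticalFrequency γ) := by
  unfold criticalFrequency
  fun_prop

theorem criticalFrequency_zero (γ : ℝ) : criticalFrequency γ 0 = 0 := by
  simp [criticalFrequency]

theorem criticalFrequency_pos {γ δ : ℝ} (hγ : γ ≠ 0) (hδ : δ ≠ 0) :
    0 < criticalFrequency γ δ := by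
  have hlt : δ ^ 2 < √(δ ^ 4 + 4 * γ ^ 2 * δ ^ 2) := by
    rw [lt_sqrt (by positivity)]
    have : 0 < 4 * γ ^ 2 * δ ^ 2 := by positivity
    linarith [show (δ ^ 2) ^ 2 = δ ^ 4 by ring]
  exact sqrt_pos.mpr (by linarith)

theorem tendsto_criticalFrequency_nhdsNE_zero {γ : ℝ} (hγ : γ ≠ 0) :
    Tendsto (criticalFrequency γ) (𝓝[≠] 0) (𝓝[≠] 0) := by
  refine tendsto_nhdsWithin_iff.mpr ⟨?_, ?_⟩
  · simpa only [criticalFrequency_zero] using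
      ((continuous_criticalFrequency γ).tendsto 0).mono_left nhdsWithin_le_nhds
  · filter_upwards [self_mem_nhdsWithin] with δ hδ
    exact (criticalFrequency_pos hγ hδ).ne'

/-- Limits of the critical delay `d*(δ)`: as `δ → ∞`, `d*(δ) → π/(2γ)`; as `δ → 0⁺`,
`d*(δ) → 1/γ`. -/
theorem critical_delay_limits (γ : ℝ) (hγ : 0 < γ) :
    let ωs : ℝ → ℝ := fun δ =>
      Real.sqrt ((-δ ^ 2 + Real.sqrt (δ ^ 4 + 4 * γ ^ 2 * δ ^ 2)) / 2)
    let ds : ℝ → ℝ := fun δ => Real.arcsin (ωs δ / γ) / ωs δ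
    Tendsto ds atTop (nhds (Real.pi / (2 * γ))) ∧
      Tendsto ds (nhdsWithin 0 (Set.Ioi 0)) (nhds (1 / γ)) := by
  intro ωs ds
  have hds : ds = (fun ω => arcsin (ω / γ) / ω) ∘ criticalFrequency γ := rfl
  rw [hds]
  constructor
  · have hcont : ContinuousAt (fun ω => arcsin (ω / γ) / ω) γ :=
      (continuous_arcsin.continuousAt.comp (continuousAt_id.div_const γ)).div
        continuousAt_id hγ.ne'
    have hω := tendsto_criticalFrequency_atTop γ
    rw [abs_of_pos hγ] at hω
    have hlim := hcont.tendsto.comp hω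
    rwa [div_self hγ.ne', arcsin_one, div_div] at hlim
  · simpa only [one_div] using (tendsto_arcsin_div_const_div_self γ).comp
      ((tendsto_criticalFrequency_nhdsNE_zero hγ.ne').mono_left (nhdsGT_le_nhdsNE 0))
end

section
/- For fixed γ > 0 and all δ > 0, the critical delay d*(δ) = arcsin(ω*/γ)/ω* with ω* = sqrt((−δ² + sqrt(δ⁴ + 4γ²δ²))/2) satisfies 1/γ < d*(δ) < π/(2γ). -/
open Real

/-- For fixed `γ > 0` and all `δ > 0`, the critical delay `d*(δ)` satisfies
`1/γ < d*(δ) < π/(2γ)`. -/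
theorem critical_delay_bounds (γ : ℝ) (hγ : 0 < γ) :
    ∀ δ : ℝ, 0 < δ →
      let ωs := Real.sqrt ((-δ ^ 2 + Real.sqrt (δ ^ 4 + 4 * γ ^ 2 * δ ^ 2)) / 2)
      let ds := Real.arcsin (ωs / γ) / ωs
      1 / γ < ds ∧ ds < Real.pi / (2 * γ) := by
  intro δ hδ ωs ds
  have h1 : δ ^ 2 < Real.sqrt (δ ^ 4 + 4 * γ ^ 2 * δ ^ 2) := by
    have : δ ^ 2 = Real.sqrt ((δ ^ 2) ^ 2) := by
      rw [Real.sqrt_sq (by positivity)]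
    rw [this]
    apply Real.sqrt_lt_sqrt (by positivity)
    nlinarith [sq_nonneg δ, sq_nonneg γ, mul_pos (mul_pos hγ hγ) (mul_pos hδ hδ)]
  have h2 : Real.sqrt (δ ^ 4 + 4 * γ ^ 2 * δ ^ 2) < δ ^ 2 + 2 * γ ^ 2 := by
    rw [show δ ^ 2 + 2 * γ ^ 2 = Real.sqrt ((δ ^ 2 + 2 * γ ^ 2) ^ 2) from
      (Real.sqrt_sq (by positivity)).symm]
    apply Real.sqrt_lt_sqrt (by positivity)
    nlinarith [pow_pos hγ 4]
  have harg_pos : 0 < (-δ ^ 2 + Real.sqrt (δ ^ 4 + 4 * γ ^ 2 * δ ^ 2)) / 2 := by linarith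
  have harg_lt : (-δ ^ 2 + Real.sqrt (δ ^ 4 + 4 * γ ^ 2 * δ ^ 2)) / 2 < γ ^ 2 := by linarith
  have hω_pos : 0 < ωs := Real.sqrt_pos.2 harg_pos
  have hω_lt : ωs < γ := by
    have : ωs < Real.sqrt (γ ^ 2) := Real.sqrt_lt_sqrt harg_pos.le harg_lt
    rwa [Real.sqrt_sq hγ.le] at this
  set x := ωs / γ with hx
  have hx_pos : 0 < x := div_pos hω_pos hγ
  have hx_lt : x < 1 := (div_lt_one hγ).2 hω_lt
  set y := Real.arcsin x with hy
  have hy_pos : 0 < y := Real.arcsin_pos.2 hx_pos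
  have hy_lt : y < π / 2 := (Real.arcsin_lt_pi_div_two).2 hx_lt
  have hsin : Real.sin y = x := Real.sin_arcsin (by linarith) hx_lt.le
  have hlow : x < y := by
    have := Real.sin_lt hy_pos
    rwa [hsin] at this
  have hhigh : y < π / 2 * x := by
    have := Real.mul_lt_sin hy_pos hy_lt
    rw [hsin] at this
    have hπ : 0 < π := Real.pi_pos
    rw [div_mul_eq_mul_div, div_lt_iff₀ hπ] at this
    nlinarith
  have hxω : x / ωs = 1 / γ := by
    rw [hx]; field_simp
  have hxω2 : (π / 2 * x) / ωs = π / (2 * γ) := by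
    rw [hx]; field_simp
  refine ⟨?_, ?_⟩
  · rw [show ds = y / ωs from rfl, ← hxω]
    exact (div_lt_div_iff_of_pos_right hω_pos).2 hlow
  · rw [show ds = y / ωs from rfl, ← hxω2]
    exact (div_lt_div_iff_of_pos_right hω_pos).2 hhigh
end

section
/- If the susceptible populations are proportional to the class distribution, S_{r,p}(t) = c(t)·N f_{r,p} with c(t) ∈ (0,1], then multiplying the infected equation I'_{r,p} = σ(Σ_{r',p'} r' I_{r',p'})·r S_{r,p}/(N E[r]) − γ I_{r,p} by r and summing over all classes yields Ĩ'(t) = γ(R(t) − 1)Ĩ(t) with R(t) = (σ c(t)/γ)·E[r²]/E[r], where Ĩ(t) = Σ_{r,p} r I_{r,p}(t). -/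
open Finset

theorem sum_mul_infection_rhs {ι : Type*} [Fintype ι] (r f x : ι → ℝ) (σ γ C N J E : ℝ)
    (hN : N ≠ 0) :
    ∑ i, r i * (σ * J * (r i * (C * N * f i)) / (N * E) - γ * x i)
      = σ * C * (∑ i, r i ^ 2 * f i) / E * J - γ * ∑ i, r i * x i := by
  have hterm : ∀ i, r i * (σ * J * (r i * (C * N * f i)) / (N * E) - γ * x i)
      = σ * C / E * J * (r i ^ 2 * f i) - γ * (r i * x i) := fun i => by
    field_simp
  simp only [hterm, sum_sub_distrib, ← mul_sum]
  ring

theorem edge_perspective_reduction_general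
    {ι : Type*} [Fintype ι]
    (r f : ι → ℝ) (σ γ N : ℝ) (hγ : 0 < γ) (hN : 0 < N)
    (c : ℝ → ℝ)
    (I : ι → ℝ → ℝ)
    (hI : ∀ i, ∀ t : ℝ, HasDerivAt (I i)
      (σ * (∑ j, r j * I j t) * (r i * (c t * N * f i)) / (N * ∑ j, r j * f j)
        - γ * I i t) t) :
    ∀ t : ℝ, HasDerivAt (fun s => ∑ i, r i * I i s)
      (γ * ((σ * c t / γ) * (∑ i, r i ^ 2 * f i) / (∑ i, r i * f i) - 1) *
        (∑ i, r i * I i t)) t := by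
  intro t
  refine (HasDerivAt.fun_sum fun i _ => (hI i t).const_mul (r i)).congr_deriv ?_
  rw [sum_mul_infection_rhs _ _ _ _ _ _ _ _ _ hN.ne']
  field_simp [hγ.ne']

/-- Edge-perspective reduction: if `S_{r,p}(t) = c(t) N f_{r,p}`, then the number of
infected edges `Ĩ(t) = Σ r I_{r,p}(t)` satisfies `Ĩ' = γ (R(t) − 1) Ĩ` with
`R(t) = (σ c(t)/γ) E[r²]/E[r]`. -/
theorem edge_perspective_reduction
    {ι : Type*} [Fintype ι] [Nonempty ι]
    (r f : ι → ℝ) (σ γ N : ℝ) (hσ : 0 < σ) (hγ : 0 < γ) (hN : 0 < N)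
    (hr : ∀ i, 0 < r i) (hf : ∀ i, 0 < f i)
    (c : ℝ → ℝ) (hc : ∀ t, 0 < c t ∧ c t ≤ 1)
    (I : ι → ℝ → ℝ)
    (hI : ∀ i, ∀ t : ℝ, HasDerivAt (I i)
      (σ * (∑ j, r j * I j t) * (r i * (c t * N * f i)) / (N * ∑ j, r j * f j)
        - γ * I i t) t) :
    ∀ t : ℝ, HasDerivAt (fun s => ∑ i, r i * I i s)
      (γ * ((σ * c t / γ) * (∑ i, r i ^ 2 * f i) / (∑ i, r i * f i) - 1) *
        (∑ i, r i * I i t)) t :=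
  edge_perspective_reduction_general r f σ γ N hγ hN c I hI
end
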